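/- arXiv:2106.11018 — 2 statements merged into one kernel-verified Lean document; each statement's English description precedes it below -/
import Mathlib

section
/- Let H be a real Hilbert space, A a bounded self-adjoint operator with ⟨Au,u⟩ ≤ -λ₁|u|² (λ₁>0), F : H → H Lipschitz with constant L_F < λ₁ and F(0)=0, and O : [0,T] → H continuous with sup_{t∈[0,T]}|O(t)| ≤ M. If z̄ : [0,T] → H is differentiable with z̄'(t) = A z̄(t) + F(z̄(t) + O(t)) and z̄(0) = y, then |z̄(t)|² ≤ |y|² + (L_F²/(λ₁-L_F)²)·M² for all t ∈ [0,T]. -/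
open scoped RealInnerProductSpace
open Set

theorem stmt3 {H : Type*} [NormedAddCommGroup H] [InnerProductSpace ℝ H] [CompleteSpace H]
    (lam1 LF T M : ℝ) (hlam : 0 < lam1) (hLF : 0 < LF) (hLFlt : LF < lam1) (hT : 0 < T)
    (A : H →L[ℝ] H) (hAsa : IsSelfAdjoint A)
    (hA : ∀ u : H, ⟪A u, u⟫ ≤ -lam1 * ‖u‖ ^ 2)
    (F : H → H) (hF : LipschitzWith (Real.toNNReal LF) F) (hF0 : F 0 = 0)
    (O : ℝ → H) (hOcont : ContinuousOn O (Icc 0 T))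
    (hOM : ∀ t ∈ Icc (0:ℝ) T, ‖O t‖ ≤ M)
    (zbar : ℝ → H) (y : H) (hz0 : zbar 0 = y)
    (hz : ∀ t ∈ Icc (0:ℝ) T, HasDerivAt zbar (A (zbar t) + F (zbar t + O t)) t) :
    ∀ t ∈ Icc (0:ℝ) T,
      ‖zbar t‖ ^ 2 ≤ ‖y‖ ^ 2 + (LF ^ 2 / (lam1 - LF) ^ 2) * M ^ 2 := by
  set c : ℝ := lam1 - LF with hc
  have hcpos : 0 < c := sub_pos.2 hLFlt
  have hM0 : 0 ≤ M := le_trans (norm_nonneg _) (hOM 0 ⟨le_refl 0, hT.le⟩)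
  set ε : ℝ := LF ^ 2 * M ^ 2 / c with hε
  have hε0 : 0 ≤ ε := by positivity
  set g : ℝ → ℝ := fun t => ‖zbar t‖ ^ 2 with hgdef
  set g' : ℝ → ℝ := fun t => 2 * ⟪A (zbar t) + F (zbar t + O t), zbar t⟫ with hg'def
  -- Lipschitz bounds on F
  have hFnorm : ∀ u v : H, ‖F u - F v‖ ≤ LF * ‖u - v‖ := by
    intro u v
    have := hF.dist_le_mul u v
    rwa [dist_eq_norm, dist_eq_norm, Real.coe_toNNReal LF hLF.le] at this
  have hFz : ∀ u : H, ‖F u‖ ≤ LF * ‖u‖ := by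
    intro u
    simpa [hF0] using hFnorm u 0
  -- derivative of g
  have hgderiv : ∀ t ∈ Icc (0:ℝ) T, HasDerivAt g (g' t) t := by
    intro t ht
    have h1 : HasDerivAt (fun s => ⟪zbar s, zbar s⟫)
        (⟪zbar t, A (zbar t) + F (zbar t + O t)⟫ + ⟪A (zbar t) + F (zbar t + O t), zbar t⟫) t :=
      HasDerivAt.inner ℝ (hz t ht) (hz t ht)
    have heq : (fun s => ⟪zbar s, zbar s⟫) = g := by
      funext s
      simp [hgdef, real_inner_self_eq_norm_sq]
    rw [heq] at h1
    convert h1 using 1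
    simp only [hg'def]
    linarith [real_inner_comm (zbar t) (A (zbar t) + F (zbar t + O t))]
  -- the differential inequality
  have hbound : ∀ x ∈ Ico (0:ℝ) T, g' x ≤ (-c) * g x + ε := by
    intro x hx
    have hxI : x ∈ Icc (0:ℝ) T := ⟨hx.1, hx.2.le⟩
    have hOMx : ‖O x‖ ≤ M := hOM x hxI
    have hAz : ⟪A (zbar x), zbar x⟫ ≤ -lam1 * ‖zbar x‖ ^ 2 := hA (zbar x)
    have h2 : ⟪F (zbar x), zbar x⟫ ≤ LF * ‖zbar x‖ ^ 2 := by
      calc ⟪F (zbar x), zbar x⟫ ≤ ‖F (zbar x)‖ * ‖zbar x‖ := real_inner_le_norm _ _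
        _ ≤ LF * ‖zbar x‖ * ‖zbar x‖ := by
            have := hFz (zbar x)
            nlinarith [norm_nonneg (zbar x)]
        _ = LF * ‖zbar x‖ ^ 2 := by ring
    have h3 : ⟪F (zbar x + O x) - F (zbar x), zbar x⟫ ≤ LF * M * ‖zbar x‖ := by
      calc ⟪F (zbar x + O x) - F (zbar x), zbar x⟫ ≤ ‖F (zbar x + O x) - F (zbar x)‖ * ‖zbar x‖ := real_inner_le_norm _ _
        _ ≤ LF * ‖O x‖ * ‖zbar x‖ := by
            have h := hFnorm (zbar x + O x) (zbar x)
            simp only [add_sub_cancel_left] at h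
            nlinarith [norm_nonneg (zbar x)]
        _ ≤ LF * M * ‖zbar x‖ := by
            have h5 := mul_le_mul_of_nonneg_left hOMx hLF.le
            exact mul_le_mul_of_nonneg_right h5 (norm_nonneg (zbar x))
    have hyoung : 2 * (LF * M * ‖zbar x‖) ≤ c * ‖zbar x‖ ^ 2 + ε := by
      have hεc : ε * c = LF ^ 2 * M ^ 2 := div_mul_cancel₀ _ hcpos.ne'
      nlinarith [sq_nonneg (c * ‖zbar x‖ - LF * M), hcpos, sq_nonneg ‖zbar x‖]
    have hsplit : ⟪F (zbar x + O x), zbar x⟫ = ⟪F (zbar x), zbar x⟫ + ⟪F (zbar x + O x) - F (zbar x), zbar x⟫ := by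
      rw [← inner_add_left]
      simp
    have : g' x = 2 * ⟪A (zbar x), zbar x⟫ + 2 * ⟪F (zbar x + O x), zbar x⟫ := by
      simp only [hg'def]
      rw [inner_add_left]; ring
    rw [this, hsplit]
    have hg : g x = ‖zbar x‖ ^ 2 := rfl
    rw [hg]
    nlinarith [hAz, h2, h3, hyoung]
  -- continuity of g
  have hgcont : ContinuousOn g (Icc 0 T) := fun t ht =>
    ((hgderiv t ht).continuousAt).continuousWithinAt
  -- Gronwall
  have hga : g 0 ≤ ‖y‖ ^ 2 := by simp [hgdef, hz0]
  have hgron := le_gronwallBound_of_liminf_deriv_right_le hgcont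
    (fun x hx r hr =>
      ((hgderiv x ⟨hx.1, hx.2.le⟩).hasDerivWithinAt.liminf_right_slope_le hr).mono
        (fun z hz => by rwa [slope_def_field, div_eq_inv_mul] at hz))
    hga hbound
  intro t ht
  have h := hgron t ht
  rw [sub_zero, gronwallBound_of_K_ne_0 (by linarith : (-c : ℝ) ≠ 0)] at h
  simp only at h
  set E := Real.exp (-c * t) with hE
  have hE0 : 0 < E := Real.exp_pos _
  have hE1 : E ≤ 1 := by
    rw [hE]
    apply Real.exp_le_one_iff.2
    nlinarith [ht.1]
  have hεc2 : ε / c = LF ^ 2 / c ^ 2 * M ^ 2 := by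
    rw [hε, div_div, ← sq]
    ring
  have : ‖y‖ ^ 2 * E + ε / (-c) * (E - 1) ≤ ‖y‖ ^ 2 + LF ^ 2 / c ^ 2 * M ^ 2 := by
    have hεdiv : 0 ≤ ε / c := div_nonneg hε0 hcpos.le
    have h1 : ‖y‖ ^ 2 * E ≤ ‖y‖ ^ 2 := by nlinarith [sq_nonneg ‖y‖]
    have h2 : ε / (-c) * (E - 1) = ε / c * (1 - E) := by
      rw [div_neg]; ring
    rw [h2, ← hεc2]
    have h3 : ε / c * (1 - E) ≤ ε / c := mul_le_of_le_one_right hεdiv (by linarith)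
    linarith
  calc g t ≤ _ := h
    _ ≤ ‖y‖ ^ 2 + LF ^ 2 / c ^ 2 * M ^ 2 := this
end

section
/- Let λ₁ > 0, L_F ∈ (0, λ₁), and let τ₀ > 0 satisfy (e^{λ₁τ₀} − 1)/(λ₁τ₀) = (λ₁ + L_F)/(2L_F). Then for all τ ∈ (0, τ₀], e^{-λ₁τ} + τ L_F·(1 − e^{-λ₁τ})/(λ₁τ) ≤ (1 + τ(λ₁+L_F)/2)·e^{-λ₁τ} ≤ e^{-τ(λ₁−L_F)/2}. -/
theorem stmt9 (lam1 LF τ0 : ℝ) (hlam : 0 < lam1) (hLF : 0 < LF) (hLFlt : LF < lam1)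
    (hτ0 : 0 < τ0)
    (hτ0eq : (Real.exp (lam1 * τ0) - 1) / (lam1 * τ0) = (lam1 + LF) / (2 * LF)) :
    ∀ τ : ℝ, 0 < τ → τ ≤ τ0 →
      Real.exp (-lam1 * τ) + τ * LF * ((1 - Real.exp (-lam1 * τ)) / (lam1 * τ))
          ≤ (1 + τ * (lam1 + LF) / 2) * Real.exp (-lam1 * τ) ∧
      (1 + τ * (lam1 + LF) / 2) * Real.exp (-lam1 * τ)
          ≤ Real.exp (-τ * (lam1 - LF) / 2) := by
  intro τ hτ hττ0
  have hx : (0:ℝ) < lam1 * τ := by positivity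
  have hy : (0:ℝ) < lam1 * τ0 := by positivity
  have hexp : Real.exp (-lam1 * τ) = (Real.exp (lam1 * τ))⁻¹ := by
    rw [← Real.exp_neg]; ring_nf
  have hmono : (Real.exp (lam1 * τ) - 1) / (lam1 * τ) ≤ (lam1 + LF) / (2 * LF) := by
    rw [← hτ0eq]
    have := convexOn_exp.secant_mono (a := 0) (x := lam1 * τ) (y := lam1 * τ0)
      (Set.mem_univ _) (Set.mem_univ _) (Set.mem_univ _) (ne_of_gt hx) (ne_of_gt hy)
      (by nlinarith)
    simpa [Real.exp_zero] using this
  constructor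
  · -- reduce to hmono
    have key : LF * (Real.exp (lam1 * τ) - 1) / lam1 ≤ τ * (lam1 + LF) / 2 := by
      rw [div_le_div_iff₀ hx (by positivity)] at hmono
      rw [div_le_div_iff₀ hlam (by norm_num)]
      nlinarith
    have h1 : 1 - Real.exp (-lam1 * τ) = Real.exp (-lam1 * τ) * (Real.exp (lam1 * τ) - 1) := by
      rw [mul_sub, ← Real.exp_add]; ring_nf; rw [Real.exp_zero]; ring
    rw [h1]
    have hpos : 0 < Real.exp (-lam1 * τ) := Real.exp_pos _
    have : τ * LF * (Real.exp (-lam1 * τ) * (Real.exp (lam1 * τ) - 1) / (lam1 * τ))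
        = Real.exp (-lam1 * τ) * (LF * (Real.exp (lam1 * τ) - 1) / lam1) := by
      field_simp
    rw [this]
    nlinarith [mul_le_mul_of_nonneg_left key hpos.le]
  · have h2 : 1 + τ * (lam1 + LF) / 2 ≤ Real.exp (τ * (lam1 + LF) / 2) := by
      have := Real.add_one_le_exp (τ * (lam1 + LF) / 2)
      linarith
    calc (1 + τ * (lam1 + LF) / 2) * Real.exp (-lam1 * τ)
        ≤ Real.exp (τ * (lam1 + LF) / 2) * Real.exp (-lam1 * τ) :=
          mul_le_mul_of_nonneg_right h2 (Real.exp_pos _).le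
      _ = Real.exp (-τ * (lam1 - LF) / 2) := by rw [← Real.exp_add]; ring_nf
end
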